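/- The real Lie algebra of ℝ-linear derivations of the split quaternions — the real quaternion algebra with generators i, j satisfying i² = 1, j² = −1, ij = −ji — is isomorphic, as a Lie algebra over ℝ, to sl(2, ℝ), the Lie algebra of traceless 2×2 real matrices with the matrix commutator. -/

import Mathlib

/-!
Every derivation of `ℍₛ = QuaternionAlgebra ℝ 1 0 (-1)` is inner. Since `ℍₛ` is generated by
`i` and `j`, a derivation `D` is determined by `D i` and `D j`, and differentiating the relations
`i² = 1`, `j² = -1`, `ij + ji = 0` leaves exactly three free parameters for them; the inner
derivations `ad q` of pure quaternions `q` realise all of them. As the centre of `ℍₛ` is `ℝ`,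
`ad` is injective on pure quaternions, and under `ℍₛ ≅ M₂(ℝ)` these, with the commutator bracket,
are the traceless matrices.
-/

attribute [local instance 100] LieRing.ofAssociativeRing

/-- The ℝ-linear derivations of an ℝ-algebra `A`, as a Lie subalgebra of
`Module.End ℝ A` (with bracket the commutator of endomorphisms). -/
def algebraDerivations (A : Type*) [Ring A] [Algebra ℝ A] :
    LieSubalgebra ℝ (Module.End ℝ A) where
  carrier := {D | ∀ x y : A, D (x * y) = D x * y + x * D y}
  add_mem' := by
    intro D E hD hE
    replace hD : ∀ x y : A, D (x * y) = D x * y + x * D y := hD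
    replace hE : ∀ x y : A, E (x * y) = E x * y + x * E y := hE
    intro x y
    simp only [LinearMap.add_apply, hD, hE, add_mul, mul_add]
    abel
  zero_mem' := by
    intro x y
    simp
  smul_mem' := by
    intro t D hD
    replace hD : ∀ x y : A, D (x * y) = D x * y + x * D y := hD
    intro x y
    simp only [LinearMap.smul_apply, hD, smul_add, smul_mul_assoc, mul_smul_comm]
  lie_mem' := by
    intro D E hD hE
    replace hD : ∀ x y : A, D (x * y) = D x * y + x * D y := hD
    replace hE : ∀ x y : A, E (x * y) = E x * y + x * E y := hE
    intro x y
    simp only [Ring.lie_def, LinearMap.sub_apply, Module.End.mul_apply, hD, hE, map_add,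
      sub_mul, mul_sub]
    abel

open LieAlgebra.SpecialLinear

section Derivations

variable {A : Type*} [Ring A] [Algebra ℝ A]

theorem mem_algebraDerivations {D : Module.End ℝ A} :
    D ∈ algebraDerivations A ↔ ∀ x y : A, D (x * y) = D x * y + x * D y :=
  Iff.rfl

namespace algebraDerivations

theorem map_one_eq_zero (D : algebraDerivations A) : D.1 1 = 0 := by
  simpa using mem_algebraDerivations.mp D.2 1 1

theorem map_algebraMap (D : algebraDerivations A) (r : ℝ) : D.1 (algebraMap ℝ A r) = 0 := by
  rw [Algebra.algebraMap_eq_smul_one, map_smul, map_one_eq_zero, smul_zero]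

theorem ext_of_adjoin_eq_top {s : Set A} (hs : Algebra.adjoin ℝ s = ⊤)
    {D E : algebraDerivations A} (h : ∀ x ∈ s, D.1 x = E.1 x) : D = E := by
  refine Subtype.ext (LinearMap.ext fun x => ?_)
  induction (hs ▸ Algebra.mem_top : x ∈ Algebra.adjoin ℝ s) using Algebra.adjoin_induction with
  | mem x hx => exact h x hx
  | algebraMap r => rw [map_algebraMap, map_algebraMap]
  | add x y _ _ hx hy => rw [map_add, map_add, hx, hy]
  | mul x y _ _ hx hy => rw [mem_algebraDerivations.mp D.2, mem_algebraDerivations.mp E.2, hx, hy]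

theorem leibniz_anticommutator_of_eq_algebraMap (D : algebraDerivations A) {x y : A} {r : ℝ}
    (h : x * y + y * x = algebraMap ℝ A r) :
    D.1 x * y + x * D.1 y + (D.1 y * x + y * D.1 x) = 0 := by
  rw [← mem_algebraDerivations.mp D.2, ← mem_algebraDerivations.mp D.2, ← map_add, h,
    map_algebraMap]

end algebraDerivations

theorem LieAlgebra.ad_mem_algebraDerivations (a : A) :
    LieAlgebra.ad ℝ A a ∈ algebraDerivations A := by
  intro x y
  simp only [LieAlgebra.ad_apply, Ring.lie_def]
  noncomm_ring

variable (A) in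
def innerDerivation : A →ₗ⁅ℝ⁆ algebraDerivations A where
  toFun a := ⟨LieAlgebra.ad ℝ A a, LieAlgebra.ad_mem_algebraDerivations a⟩
  map_add' a b := Subtype.ext (map_add _ a b)
  map_smul' t a := Subtype.ext (map_smul _ t a)
  map_lie' := Subtype.ext (LieHom.map_lie _ _ _)

theorem innerDerivation_apply (a x : A) : (innerDerivation A a).1 x = a * x - x * a :=
  rfl

end Derivations

theorem QuaternionAlgebra.adjoin_i_j_eq_top {R : Type*} [CommRing R] {c₁ c₂ c₃ : R} :
    Algebra.adjoin R {(⟨0, 1, 0, 0⟩ : QuaternionAlgebra R c₁ c₂ c₃), ⟨0, 0, 1, 0⟩} = ⊤ := by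
  set S := Algebra.adjoin R {(⟨0, 1, 0, 0⟩ : QuaternionAlgebra R c₁ c₂ c₃), ⟨0, 0, 1, 0⟩}
  have hi : ⟨0, 1, 0, 0⟩ ∈ S := Algebra.subset_adjoin (Set.mem_insert _ _)
  have hj : ⟨0, 0, 1, 0⟩ ∈ S := Algebra.subset_adjoin (Set.mem_insert_of_mem _ rfl)
  refine eq_top_iff.mpr fun x _ => ?_
  have hx : x = algebraMap R _ x.re + x.imI • ⟨0, 1, 0, 0⟩ + x.imJ • ⟨0, 0, 1, 0⟩
      + x.imK • ((⟨0, 1, 0, 0⟩ : QuaternionAlgebra R c₁ c₂ c₃) * ⟨0, 0, 1, 0⟩) := by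
    ext <;> simp
  rw [hx]
  exact add_mem (add_mem (add_mem (S.algebraMap_mem _) (S.smul_mem hi _)) (S.smul_mem hj _))
    (S.smul_mem (S.mul_mem hi hj) _)

theorem LieAlgebra.SpecialLinear.sl_fin_two_val_one_one {R : Type*} [CommRing R]
    (X : sl (Fin 2) R) : X.val 1 1 = -X.val 0 0 := by
  have h : X.val.trace = 0 := X.2
  rw [Matrix.trace_fin_two] at h
  exact eq_neg_of_add_eq_zero_right h

namespace SplitQuaternion

local notation "ℍₛ" => QuaternionAlgebra ℝ 1 0 (-1)
local notation "𝐢" => (⟨0, 1, 0, 0⟩ : ℍₛ)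
local notation "𝐣" => (⟨0, 0, 1, 0⟩ : ℍₛ)

/-- The inverse, on traceless matrices, of the algebra isomorphism `ℍₛ ≅ M₂(ℝ)` sending
`i ↦ !![1, 0; 0, -1]`, `j ↦ !![0, 1; -1, 0]` (so `k = ij ↦ !![0, 1; 1, 0]`). -/
noncomputable def ofSl2 : sl (Fin 2) ℝ →ₗ⁅ℝ⁆ ℍₛ where
  toFun X := ⟨0, X.val 0 0, (X.val 0 1 - X.val 1 0) / 2, (X.val 0 1 + X.val 1 0) / 2⟩
  map_add' X Y := by ext <;> simp <;> ring
  map_smul' t X := by ext <;> simp <;> ring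
  map_lie' {X Y} := by
    ext <;> simp [Ring.lie_def, Matrix.mul_apply, sl_fin_two_val_one_one] <;> ring

theorem innerDerivation_ofSl2_apply_i (X : sl (Fin 2) ℝ) :
    (innerDerivation ℍₛ (ofSl2 X)).1 𝐢 =
      ⟨0, 0, -(X.val 0 1 + X.val 1 0), X.val 1 0 - X.val 0 1⟩ := by
  ext <;> simp [innerDerivation_apply, ofSl2] <;> ring

theorem innerDerivation_ofSl2_apply_j (X : sl (Fin 2) ℝ) :
    (innerDerivation ℍₛ (ofSl2 X)).1 𝐣 = ⟨0, -(X.val 0 1 + X.val 1 0), 0, 2 * X.val 0 0⟩ := by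
  ext <;> simp [innerDerivation_apply, ofSl2] <;> ring

theorem exists_derivation_apply_i_j (D : algebraDerivations ℍₛ) :
    ∃ a b c : ℝ, D.1 𝐢 = ⟨0, 0, a, b⟩ ∧ D.1 𝐣 = ⟨0, a, 0, c⟩ := by
  have hii := algebraDerivations.leibniz_anticommutator_of_eq_algebraMap D (x := 𝐢) (y := 𝐢)
    (r := 2) (by ext <;> simp [QuaternionAlgebra.algebraMap_eq]; norm_num)
  have hjj := algebraDerivations.leibniz_anticommutator_of_eq_algebraMap D (x := 𝐣) (y := 𝐣)
    (r := -2) (by ext <;> simp [QuaternionAlgebra.algebraMap_eq]; norm_num)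
  have hij := algebraDerivations.leibniz_anticommutator_of_eq_algebraMap D (x := 𝐢) (y := 𝐣)
    (r := 0) (by ext <;> simp)
  generalize D.1 𝐢 = u at hii hij
  generalize D.1 𝐣 = v at hjj hij
  refine ⟨u.imJ, u.imK, v.imK, ?_, ?_⟩ <;>
    ext <;> simp [QuaternionAlgebra.ext_iff] at hii hjj hij ⊢ <;> linarith

theorem injective_innerDerivation_comp_ofSl2 :
    Function.Injective ((innerDerivation ℍₛ).comp ofSl2) := by
  refine (injective_iff_map_eq_zero _).mpr fun X hX => ?_
  have hi := congrArg (fun D : algebraDerivations ℍₛ => D.1 𝐢) hX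
  have hj := congrArg (fun D : algebraDerivations ℍₛ => D.1 𝐣) hX
  simp only [LieHom.comp_apply, innerDerivation_ofSl2_apply_i, innerDerivation_ofSl2_apply_j,
    ZeroMemClass.coe_zero, LinearMap.zero_apply, QuaternionAlgebra.ext_iff,
    QuaternionAlgebra.imJ_zero, QuaternionAlgebra.imK_zero] at hi hj
  obtain ⟨-, -, h₁, h₂⟩ := hi
  obtain ⟨-, -, -, h₃⟩ := hj
  have h₄ := sl_fin_two_val_one_one X
  refine Subtype.ext (Matrix.ext fun i j => ?_)
  fin_cases i <;> fin_cases j <;> simp <;> linarith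

theorem surjective_innerDerivation_comp_ofSl2 :
    Function.Surjective ((innerDerivation ℍₛ).comp ofSl2) := by
  intro D
  obtain ⟨a, b, c, hDi, hDj⟩ := exists_derivation_apply_i_j D
  let X : sl (Fin 2) ℝ := ⟨!![c / 2, (-a - b) / 2; (b - a) / 2, -(c / 2)],
    LinearMap.mem_ker.mpr (by simp [Matrix.trace_fin_two])⟩
  refine ⟨X, algebraDerivations.ext_of_adjoin_eq_top QuaternionAlgebra.adjoin_i_j_eq_top ?_⟩
  rintro x (rfl | rfl)
  · rw [LieHom.comp_apply, innerDerivation_ofSl2_apply_i, hDi]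
    ext <;> simp [X] <;> ring
  · rw [LieHom.comp_apply, innerDerivation_ofSl2_apply_j, hDj]
    ext <;> simp [X] <;> ring

noncomputable def sl2EquivDerivations : sl (Fin 2) ℝ ≃ₗ⁅ℝ⁆ algebraDerivations ℍₛ :=
  LieEquiv.ofBijective _
    ⟨injective_innerDerivation_comp_ofSl2, surjective_innerDerivation_comp_ofSl2⟩

end SplitQuaternion

/-- The real Lie algebra of ℝ-linear derivations of the split quaternions
(the real quaternion algebra with i² = 1, j² = −1, ij = −ji) is isomorphic to
`sl(2, ℝ)`, the Lie algebra of traceless 2×2 real matrices. -/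
theorem derivations_splitQuaternion_iso_sl2 :
    Nonempty ((algebraDerivations (QuaternionAlgebra ℝ 1 0 (-1))) ≃ₗ⁅ℝ⁆
      (LieAlgebra.SpecialLinear.sl (Fin 2) ℝ)) :=
  ⟨SplitQuaternion.sl2EquivDerivations.symm⟩
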